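/- arXiv:2206.04368 — 2 statements merged into one kernel-verified Lean document; each statement's English description precedes it below -/
import Mathlib

section
/- Let H be a real Hilbert space, T > 0, and let A : H → H be continuous and monotone, i.e. ⟨A x − A y, x − y⟩ ≥ 0 for all x, y ∈ H. For each n let u_n : [0,T] → H be continuously differentiable with u_n'(t) + A(u_n(t)) = f_n(t) for all t ∈ [0,T] and u_n(0) = V_n, where f_n : [0,T] → H is continuous and V_n ∈ H. Let u₀ : [0,T] → H be continuously differentiable, f : [0,T] → H continuous, and V ∈ H. Assume: (a) sup_n sup_{t ∈ [0,T]} ‖u_n(t)‖ < ∞; (b) for every t ∈ [0,T] and every v ∈ H, ⟨u_n(t), v⟩ → ⟨u₀(t), v⟩; (c) for every continuous φ : [0,T] → H, ∫₀ᵀ ⟨u_n'(τ), φ(τ)⟩ dτ → ∫₀ᵀ ⟨u₀'(τ), φ(τ)⟩ dτ; (d) ∫₀ᵀ ‖f_n(τ) − f(τ)‖² dτ → 0; (e) ‖V_n − V‖ → 0. Then for every t ∈ [0,T], ‖u_n(t)‖ → ‖u₀(t)‖, and consequently u_n(t) → u₀(t) strongly in H. (Strong convergence of the approximating solutions in the model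 case of the Minty monotonicity method, Appendix A.) -/
open MeasureTheory Filter RealInnerProductSpace Set Real Topology

/-!
By monotonicity of `A`,
`d/dτ ‖u_n - u_m‖² ≤ 2⟪f_n - f_m, u_n - u_m⟫ ≤ ‖f_n - f_m‖² + ‖u_n - u_m‖²`, so Grönwall gives
`‖u_n(t) - u_m(t)‖² ≤ eᵗ (‖V_n - V_m‖² + ∫₀ᵀ ‖f_n - f_m‖²)`. As the data converge strongly,
`(u_n(t))` is Cauchy, and its strong limit must be the weak limit `u₀(t)`.
-/

theorem cauchySeq_of_dist_sq_le_add {α ι : Type*} [PseudoMetricSpace α] [Nonempty ι]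
    [SemilatticeSup ι] {x : ι → α} {b : ι → ℝ} (hx : ∀ n m, dist (x n) (x m) ^ 2 ≤ b n + b m)
    (hb : Tendsto b atTop (𝓝 0)) : CauchySeq x := by
  refine Metric.cauchySeq_iff'.2 fun ε hε => ?_
  obtain ⟨N, hN⟩ := eventually_atTop.1 (hb.eventually_lt_const (half_pos (pow_pos hε 2)))
  refine ⟨N, fun n hn => lt_of_pow_lt_pow_left₀ 2 hε.le ?_⟩
  linarith [hx n N, hN n hn, hN N le_rfl]

section NormedAddCommGroup

variable {E : Type*} [SeminormedAddCommGroup E]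

theorem norm_sub_sq_le_two_mul (x y z : E) :
    ‖x - y‖ ^ 2 ≤ 2 * ‖x - z‖ ^ 2 + 2 * ‖y - z‖ ^ 2 := by
  have htri : ‖x - y‖ ≤ ‖x - z‖ + ‖y - z‖ := norm_sub_le_norm_sub_add_norm_sub x z y |>.trans
    (by rw [norm_sub_rev z y])
  nlinarith [norm_nonneg (x - y), add_sq_le (a := ‖x - z‖) (b := ‖y - z‖)]

theorem integral_norm_sub_sq_le_two_mul {a b : ℝ} (hab : a ≤ b) {g h k : ℝ → E}
    (hg : ContinuousOn g (Icc a b)) (hh : ContinuousOn h (Icc a b))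
    (hk : ContinuousOn k (Icc a b)) :
    ∫ τ in a..b, ‖g τ - h τ‖ ^ 2 ≤
      2 * (∫ τ in a..b, ‖g τ - k τ‖ ^ 2) + 2 * ∫ τ in a..b, ‖h τ - k τ‖ ^ 2 := by
  have hint : ∀ {p q : ℝ → E}, ContinuousOn p (Icc a b) → ContinuousOn q (Icc a b) →
      IntervalIntegrable (fun τ => ‖p τ - q τ‖ ^ 2) volume a b := fun hp hq =>
    ((hp.sub hq).norm.pow 2).intervalIntegrable_of_Icc hab
  calc ∫ τ in a..b, ‖g τ - h τ‖ ^ 2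
      ≤ ∫ τ in a..b, (2 * ‖g τ - k τ‖ ^ 2 + 2 * ‖h τ - k τ‖ ^ 2) :=
        intervalIntegral.integral_mono_on hab (hint hg hh)
          (((hint hg hk).const_mul 2).add ((hint hh hk).const_mul 2))
          fun τ _ => norm_sub_sq_le_two_mul _ _ _
    _ = 2 * (∫ τ in a..b, ‖g τ - k τ‖ ^ 2) + 2 * ∫ τ in a..b, ‖h τ - k τ‖ ^ 2 := by
        rw [intervalIntegral.integral_add ((hint hg hk).const_mul 2) ((hint hh hk).const_mul 2),
          intervalIntegral.integral_const_mul, intervalIntegral.integral_const_mul]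

end NormedAddCommGroup

section InnerProductSpace

variable {H : Type*} [NormedAddCommGroup H] [InnerProductSpace ℝ H]

theorem CauchySeq.tendsto_of_tendsto_inner [CompleteSpace H] {ι : Type*} [Nonempty ι]
    [SemilatticeSup ι] {x : ι → H} {y : H} (hx : CauchySeq x)
    (hweak : ∀ v, Tendsto (fun n => ⟪x n, v⟫) atTop (𝓝 ⟪y, v⟫)) : Tendsto x atTop (𝓝 y) := by
  obtain ⟨z, hz⟩ := cauchySeq_tendsto_of_complete hx
  have hzy : z = y := ext_inner_right ℝ fun v =>
    tendsto_nhds_unique (hz.inner tendsto_const_nhds) (hweak v)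
  rwa [← hzy]

variable {A : H → H}

theorem inner_sub_le_of_monotone (hA : ∀ x y, 0 ≤ ⟪A x - A y, x - y⟫) {x y x' y' g h : H}
    (hx : x' + A x = g) (hy : y' + A y = h) : ⟪x' - y', x - y⟫ ≤ ⟪g - h, x - y⟫ := by
  have hsplit : x' - y' = (g - h) - (A x - A y) := by rw [← hx, ← hy]; abel
  rw [hsplit, inner_sub_left]
  linarith [hA x y]

theorem norm_sub_sq_le_exp_mul_of_monotone (hA : ∀ x y, 0 ≤ ⟪A x - A y, x - y⟫) {a b c : ℝ}
    (hb : b ∈ Icc a c) {v w v' w' g h : ℝ → H}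
    (hv : ∀ τ ∈ Icc a c, HasDerivAt v (v' τ) τ) (hw : ∀ τ ∈ Icc a c, HasDerivAt w (w' τ) τ)
    (hveq : ∀ τ ∈ Icc a c, v' τ + A (v τ) = g τ) (hweq : ∀ τ ∈ Icc a c, w' τ + A (w τ) = h τ)
    (hgh : IntegrableOn (fun τ => ‖g τ - h τ‖ ^ 2) (Icc a c)) :
    ‖v b - w b‖ ^ 2 ≤ exp (b - a) * (‖v a - w a‖ ^ 2 + ∫ τ in a..c, ‖g τ - h τ‖ ^ 2) := by
  have hsub : Icc a b ⊆ Icc a c := Icc_subset_Icc_right hb.2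
  set φ : ℝ → ℝ := fun τ => exp (a - τ) * ‖v τ - w τ‖ ^ 2
  set φ' : ℝ → ℝ := fun τ =>
    exp (a - τ) * (2 * ⟪v τ - w τ, v' τ - w' τ⟫ - ‖v τ - w τ‖ ^ 2)
  have hφ : ∀ τ ∈ Icc a b, HasDerivAt φ (φ' τ) τ := fun τ hτ =>
    (((hasDerivAt_id τ).const_sub a).exp.mul
      ((hv τ (hsub hτ)).sub (hw τ (hsub hτ))).norm_sq).congr_deriv
        (by simp only [φ', id, Pi.sub_apply]; ring)
  -- the weight `exp (a - τ)` absorbs the `‖v - w‖²` term of the AM-GM bound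
  have hφ'_le : ∀ τ ∈ Ioo a b, φ' τ ≤ ‖g τ - h τ‖ ^ 2 := fun τ hτ => by
    have hτ' := hsub (Ioo_subset_Icc_self hτ)
    have hmono := inner_sub_le_of_monotone hA (hveq τ hτ') (hweq τ hτ')
    have hcs := real_inner_le_norm (g τ - h τ) (v τ - w τ)
    have hamgm := two_mul_le_add_sq ‖g τ - h τ‖ ‖v τ - w τ‖
    rw [real_inner_comm] at hmono
    calc φ' τ ≤ exp (a - τ) * ‖g τ - h τ‖ ^ 2 :=
          mul_le_mul_of_nonneg_left (by linarith) (exp_pos _).le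
      _ ≤ ‖g τ - h τ‖ ^ 2 :=
          mul_le_of_le_one_left (by positivity) (exp_le_one_iff.2 (by linarith [hτ.1]))
  have hftc := intervalIntegral.sub_le_integral_of_hasDeriv_right_of_le hb.1
    (fun τ hτ => (hφ τ hτ).continuousAt.continuousWithinAt)
    (fun τ hτ => (hφ τ (Ioo_subset_Icc_self hτ)).hasDerivWithinAt) (hgh.mono_set hsub) hφ'_le
  simp only [φ, sub_self, exp_zero, one_mul] at hftc
  calc ‖v b - w b‖ ^ 2 = exp (b - a) * (exp (a - b) * ‖v b - w b‖ ^ 2) := by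
        rw [← mul_assoc, ← exp_add]; simp
    _ ≤ exp (b - a) * (‖v a - w a‖ ^ 2 + ∫ τ in a..b, ‖g τ - h τ‖ ^ 2) := by
        gcongr; linarith
    _ ≤ exp (b - a) * (‖v a - w a‖ ^ 2 + ∫ τ in a..c, ‖g τ - h τ‖ ^ 2) := by
        gcongr
        exact intervalIntegral.integral_mono_interval le_rfl hb.1 hb.2
          (ae_of_all _ fun τ => by positivity)
          ((intervalIntegrable_iff_integrableOn_Icc_of_le (hb.1.trans hb.2)).2 hgh)

end InnerProductSpace

theorem minty_strong_convergence_general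
    {H : Type*} [NormedAddCommGroup H] [InnerProductSpace ℝ H] [CompleteSpace H]
    (T : ℝ) (A : H → H)
    (hAmono : ∀ x y : H, 0 ≤ ⟪A x - A y, x - y⟫)
    (u : ℕ → ℝ → H) (u' : ℕ → ℝ → H) (f : ℕ → ℝ → H) (V : ℕ → H)
    (u₀ : ℝ → H) (f₀ : ℝ → H) (V₀ : H)
    (hderiv : ∀ n, ∀ t ∈ Set.Icc (0 : ℝ) T, HasDerivAt (u n) (u' n t) t)
    (hfcont : ∀ n, ContinuousOn (f n) (Set.Icc 0 T))
    (heq : ∀ n, ∀ t ∈ Set.Icc (0 : ℝ) T, u' n t + A (u n t) = f n t)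
    (hinit : ∀ n, u n 0 = V n)
    (hf₀cont : ContinuousOn f₀ (Set.Icc 0 T))
    -- (b) pointwise-in-time weak convergence
    (hweak : ∀ t ∈ Set.Icc (0 : ℝ) T, ∀ v : H,
      Tendsto (fun n => ⟪u n t, v⟫) atTop (nhds ⟪u₀ t, v⟫))
    -- (d) strong L² convergence of the right-hand sides
    (hfconv : Tendsto (fun n => ∫ τ in (0 : ℝ)..T, ‖f n τ - f₀ τ‖ ^ 2)
      atTop (nhds 0))
    -- (e) strong convergence of the initial data
    (hVconv : Tendsto (fun n => ‖V n - V₀‖) atTop (nhds 0)) :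
    ∀ t ∈ Set.Icc (0 : ℝ) T,
      Tendsto (fun n => ‖u n t‖) atTop (nhds ‖u₀ t‖) ∧
        Tendsto (fun n => ‖u n t - u₀ t‖) atTop (nhds 0) := by
  intro t ht
  have hT : 0 ≤ T := ht.1.trans ht.2
  have hcauchy : CauchySeq fun n => u n t := by
    refine cauchySeq_of_dist_sq_le_add
      (b := fun n => 2 * exp t * (‖V n - V₀‖ ^ 2 + ∫ τ in (0 : ℝ)..T, ‖f n τ - f₀ τ‖ ^ 2))
      (fun n m => ?_) (by simpa using ((hVconv.pow 2).add hfconv).const_mul (2 * exp t))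
    have henergy := norm_sub_sq_le_exp_mul_of_monotone hAmono ht (hderiv n) (hderiv m)
      (heq n) (heq m) (((hfcont n).sub (hfcont m)).norm.pow 2).integrableOn_Icc
    rw [sub_zero, hinit, hinit, ← dist_eq_norm] at henergy
    calc dist (u n t) (u m t) ^ 2
        ≤ exp t * (‖V n - V m‖ ^ 2 + ∫ τ in (0 : ℝ)..T, ‖f n τ - f m τ‖ ^ 2) := henergy
      _ ≤ exp t * ((2 * ‖V n - V₀‖ ^ 2 + 2 * ‖V m - V₀‖ ^ 2) +
            (2 * (∫ τ in (0 : ℝ)..T, ‖f n τ - f₀ τ‖ ^ 2) +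
              2 * ∫ τ in (0 : ℝ)..T, ‖f m τ - f₀ τ‖ ^ 2)) := by
          gcongr
          · exact norm_sub_sq_le_two_mul _ _ _
          · exact integral_norm_sub_sq_le_two_mul hT (hfcont n) (hfcont m) hf₀cont
      _ = _ := by ring
  have hlim := hcauchy.tendsto_of_tendsto_inner (hweak t ht)
  exact ⟨hlim.norm, tendsto_iff_norm_sub_tendsto_zero.mp hlim⟩

/-- Strong convergence of the approximating solutions in the model case of the
Minty monotonicity method: under uniform boundedness, weak convergence of
`u_n(t)` and of the derivatives (tested against continuous functions), strong
convergence of the data `f_n → f` in `L²` and `V_n → V` in `H`, the norms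
converge, `‖u_n(t)‖ → ‖u₀(t)‖`, and consequently `u_n(t) → u₀(t)` strongly. -/
theorem minty_strong_convergence
    {H : Type*} [NormedAddCommGroup H] [InnerProductSpace ℝ H] [CompleteSpace H]
    (T : ℝ) (hT : 0 < T) (A : H → H)
    (hAcont : Continuous A)
    (hAmono : ∀ x y : H, 0 ≤ ⟪A x - A y, x - y⟫)
    (u : ℕ → ℝ → H) (u' : ℕ → ℝ → H) (f : ℕ → ℝ → H) (V : ℕ → H)
    (u₀ u₀' : ℝ → H) (f₀ : ℝ → H) (V₀ : H)
    (hderiv : ∀ n, ∀ t ∈ Set.Icc (0 : ℝ) T, HasDerivAt (u n) (u' n t) t)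
    (hcont : ∀ n, ContinuousOn (u' n) (Set.Icc 0 T))
    (hfcont : ∀ n, ContinuousOn (f n) (Set.Icc 0 T))
    (heq : ∀ n, ∀ t ∈ Set.Icc (0 : ℝ) T, u' n t + A (u n t) = f n t)
    (hinit : ∀ n, u n 0 = V n)
    (hderiv₀ : ∀ t ∈ Set.Icc (0 : ℝ) T, HasDerivAt u₀ (u₀' t) t)
    (hcont₀ : ContinuousOn u₀' (Set.Icc 0 T))
    (hf₀cont : ContinuousOn f₀ (Set.Icc 0 T))
    -- (a) uniform boundedness
    (hbound : ∃ C : ℝ, ∀ n, ∀ t ∈ Set.Icc (0 : ℝ) T, ‖u n t‖ ≤ C)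
    -- (b) pointwise-in-time weak convergence
    (hweak : ∀ t ∈ Set.Icc (0 : ℝ) T, ∀ v : H,
      Tendsto (fun n => ⟪u n t, v⟫) atTop (nhds ⟪u₀ t, v⟫))
    -- (c) weak convergence of derivatives against continuous test functions
    (hweak' : ∀ φ : ℝ → H, Continuous φ →
      Tendsto (fun n => ∫ τ in (0 : ℝ)..T, ⟪u' n τ, φ τ⟫) atTop
        (nhds (∫ τ in (0 : ℝ)..T, ⟪u₀' τ, φ τ⟫)))
    -- (d) strong L² convergence of the right-hand sides
    (hfconv : Tendsto (fun n => ∫ τ in (0 : ℝ)..T, ‖f n τ - f₀ τ‖ ^ 2)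
      atTop (nhds 0))
    -- (e) strong convergence of the initial data
    (hVconv : Tendsto (fun n => ‖V n - V₀‖) atTop (nhds 0)) :
    ∀ t ∈ Set.Icc (0 : ℝ) T,
      Tendsto (fun n => ‖u n t‖) atTop (nhds ‖u₀ t‖) ∧
        Tendsto (fun n => ‖u n t - u₀ t‖) atTop (nhds 0) :=
  minty_strong_convergence_general T A hAmono u u' f V u₀ f₀ V₀ hderiv hfcont heq hinit hf₀cont
    hweak hfconv hVconv
end

section
/- Let H be a real Hilbert space, T > 0, and let A : H → H be continuous and monotone, i.e. ⟨A x − A y, x − y⟩ ≥ 0 for all x, y ∈ H. For each n let u_n : [0,T] → H be continuously differentiable with u_n'(t) + A(u_n(t)) = f_n(t) for all t ∈ [0,T] and u_n(0) = V_n, where f_n : [0,T] → H is continuous and V_n ∈ H. Let u₀ : [0,T] → H be continuously differentiable, f : [0,T] → H continuous, and V ∈ H. Assume: (a) sup_n sup_{t ∈ [0,T]} ‖u_n(t)‖ < ∞; (b) for every t ∈ [0,T] and every v ∈ H, ⟨u_n(t), v⟩ → ⟨u₀(t), v⟩; (c) for every continuous φ : [0,T] → H, ∫₀ᵀ ⟨u_n'(τ),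 φ(τ)⟩ dτ → ∫₀ᵀ ⟨u₀'(τ), φ(τ)⟩ dτ; (d) ∫₀ᵀ ‖f_n(τ) − f(τ)‖² dτ → 0; (e) ‖V_n − V‖ → 0. Then u₀(0) = V and u₀'(t) + A(u₀(t)) = f(t) for all t ∈ [0,T]. (Identification of the limit equation in the model case of the Minty monotonicity method, Appendix A.) -/
/-!
Monotonicity of `A` makes the flow a contraction up to the data: for two solutions,
`d/dt ‖u - v‖² ≤ ‖u - v‖² + ‖f - g‖²`, so by Gronwall
`‖u_n(t) - u_m(t)‖² ≤ e^T (‖V_n - V_m‖² + ‖f_n - f_m‖²_{L²})`. Pairing `u_n(t) - u_m(t)` with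
`u_n(t) - u₀(t)` and letting `m → ∞` turns the weak convergence into uniform convergence
`u_n → u₀` on `[0, T]`. Then `A(u_n) → A(u₀)` uniformly, since `A` is uniformly continuous near
the compact curve `u₀([0, T])`, while `f_n ⇀ f₀` by Cauchy–Schwarz. Passing to the limit in the
equation tested against `φ` identifies `u₀' + A u₀ - f₀` as orthogonal to every continuous `φ`,
hence zero; the initial condition follows from `u_n(0) → u₀(0)`.
-/

open MeasureTheory Filter RealInnerProductSpace Set Topology

theorem TendstoUniformlyOn.comp_of_isCompact_image {α β γ ι : Type*} [UniformSpace β]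
    [UniformSpace γ] {F : ι → α → β} {f : α → β} {p : Filter ι} {s : Set α} {g : β → γ}
    (h : TendstoUniformlyOn F f p s) (hg : Continuous g) (hK : IsCompact (f '' s)) :
    TendstoUniformlyOn (fun i x => g (F i x)) (fun x => g (f x)) p s := by
  intro r hr
  filter_upwards [h _ (hK.uniformContinuousAt_of_continuousAt g (fun _ _ => hg.continuousAt) hr)]
    with i hi x hx
  exact hi x hx (mem_image_of_mem f hx)

theorem ContinuousOn.exists_continuous_eqOn_Icc {α X : Type*} [LinearOrder α]
    [TopologicalSpace α] [OrderTopology α] [TopologicalSpace X] {g : α → X} {a b : α}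
    (hab : a ≤ b) (hg : ContinuousOn g (Icc a b)) :
    ∃ φ : α → X, Continuous φ ∧ EqOn φ g (Icc a b) :=
  ⟨IccExtend hab ((Icc a b).domRestrict g), hg.domRestrict.Icc_extend',
    fun _ hx => IccExtend_of_mem hab _ hx⟩

theorem norm_sub_sq_le_two_mul_add {E : Type*} [SeminormedAddCommGroup E] (x y z : E) :
    ‖x - y‖ ^ 2 ≤ 2 * ‖x - z‖ ^ 2 + 2 * ‖y - z‖ ^ 2 := by
  have htri : ‖x - y‖ ≤ ‖x - z‖ + ‖y - z‖ :=
    norm_sub_rev z y ▸ norm_sub_le_norm_sub_add_norm_sub x z y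
  nlinarith [norm_nonneg (x - y), sq_nonneg (‖x - z‖ - ‖y - z‖)]

theorem ContinuousOn.memLp_two_restrict_Ioc {E : Type*} [NormedAddCommGroup E] {f : ℝ → E}
    {a b : ℝ} (hf : ContinuousOn f (Icc a b)) : MemLp f 2 (volume.restrict (Ioc a b)) := by
  rw [memLp_two_iff_integrable_sq_norm
    ((hf.mono Ioc_subset_Icc_self).aestronglyMeasurable measurableSet_Ioc)]
  exact (hf.norm.pow 2).integrableOn_Icc.mono_set Ioc_subset_Icc_self

theorem integral_norm_mul_norm_le_sqrt_mul_sqrt {E : Type*} [NormedAddCommGroup E]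
    {f g : ℝ → E} {a b : ℝ} (hab : a ≤ b)
    (hf : ContinuousOn f (Icc a b)) (hg : ContinuousOn g (Icc a b)) :
    ∫ t in a..b, ‖f t‖ * ‖g t‖ ≤ √(∫ t in a..b, ‖f t‖ ^ 2) * √(∫ t in a..b, ‖g t‖ ^ 2) := by
  simp only [intervalIntegral.integral_of_le hab, Real.sqrt_eq_rpow, ← Real.rpow_two]
  simpa using integral_mul_norm_le_Lp_mul_Lq Real.HolderConjugate.two_two
    (by simpa using hf.memLp_two_restrict_Ioc) (by simpa using hg.memLp_two_restrict_Ioc)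

section InnerProductSpace

variable {H : Type*} [NormedAddCommGroup H] [InnerProductSpace ℝ H]

theorem norm_le_of_tendsto_inner {ι : Type*} {l : Filter ι} [l.NeBot] {x : ι → H} {y : H}
    {c : ι → ℝ} {C : ℝ} (hx : Tendsto (fun i => ⟪x i, y⟫) l (𝓝 ⟪y, y⟫))
    (hc : Tendsto c l (𝓝 C)) (hle : ∀ᶠ i in l, ‖x i‖ ≤ c i) : ‖y‖ ≤ C := by
  have hC : 0 ≤ C := ge_of_tendsto hc (hle.mono fun _ h => (norm_nonneg _).trans h)
  have hsq : ‖y‖ ^ 2 ≤ C * ‖y‖ := by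
    rw [← real_inner_self_eq_norm_sq]
    refine le_of_tendsto_of_tendsto hx (hc.mul_const _) (hle.mono fun i h => ?_)
    exact (real_inner_le_norm _ _).trans (mul_le_mul_of_nonneg_right h (norm_nonneg _))
  nlinarith [norm_nonneg y]

theorem integral_inner_sub_left {F G φ : ℝ → H} {a b : ℝ} (hab : a ≤ b)
    (hF : ContinuousOn F (Icc a b)) (hG : ContinuousOn G (Icc a b))
    (hφ : ContinuousOn φ (Icc a b)) :
    ∫ t in a..b, ⟪F t - G t, φ t⟫ = (∫ t in a..b, ⟪F t, φ t⟫) - ∫ t in a..b, ⟪G t, φ t⟫ := by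
  simp only [inner_sub_left]
  exact intervalIntegral.integral_sub ((hF.inner hφ).intervalIntegrable_of_Icc hab)
    ((hG.inner hφ).intervalIntegrable_of_Icc hab)

theorem eqOn_of_forall_integral_inner_eq {F G : ℝ → H} {a b : ℝ} (hab : a < b)
    (hF : ContinuousOn F (Icc a b)) (hG : ContinuousOn G (Icc a b))
    (h : ∀ φ : ℝ → H, Continuous φ → ∫ t in a..b, ⟪F t, φ t⟫ = ∫ t in a..b, ⟪G t, φ t⟫) :
    EqOn F G (Icc a b) := by
  obtain ⟨φ, hφ, hφFG⟩ := (hF.sub hG).exists_continuous_eqOn_Icc hab.le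
  intro t ht
  by_contra hne
  have hφt : 0 < ‖φ t‖ ^ 2 := by
    rw [hφFG ht, Pi.sub_apply]
    exact pow_pos (norm_pos_iff.2 (sub_ne_zero.2 hne)) 2
  have hpos : 0 < ∫ s in a..b, ‖φ s‖ ^ 2 :=
    intervalIntegral.integral_pos hab (hφ.norm.pow 2).continuousOn (fun _ _ => by positivity)
      ⟨t, ht, hφt⟩
  have hzero : ∫ s in a..b, ‖φ s‖ ^ 2 = 0 := by
    rw [← sub_eq_zero.2 (h φ hφ), ← integral_inner_sub_left hab.le hF hG hφ.continuousOn]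
    refine intervalIntegral.integral_congr fun s hs => ?_
    rw [uIcc_of_le hab.le] at hs
    rw [hφFG hs, Pi.sub_apply, real_inner_self_eq_norm_sq]
  exact hpos.ne' hzero

theorem tendsto_integral_inner_of_tendsto_integral_norm_sub_sq {ι : Type*} {l : Filter ι}
    {f : ι → ℝ → H} {f₀ φ : ℝ → H} {a b : ℝ} (hab : a ≤ b)
    (hf : ∀ i, ContinuousOn (f i) (Icc a b)) (hf₀ : ContinuousOn f₀ (Icc a b))
    (hφ : ContinuousOn φ (Icc a b))
    (h : Tendsto (fun i => ∫ t in a..b, ‖f i t - f₀ t‖ ^ 2) l (𝓝 0)) :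
    Tendsto (fun i => ∫ t in a..b, ⟪f i t, φ t⟫) l (𝓝 (∫ t in a..b, ⟪f₀ t, φ t⟫)) := by
  have hbound : ∀ i, ‖(∫ t in a..b, ⟪f i t, φ t⟫) - ∫ t in a..b, ⟪f₀ t, φ t⟫‖ ≤
      √(∫ t in a..b, ‖f i t - f₀ t‖ ^ 2) * √(∫ t in a..b, ‖φ t‖ ^ 2) := fun i => calc
    _ = ‖∫ t in a..b, ⟪f i t - f₀ t, φ t⟫‖ := by rw [integral_inner_sub_left hab (hf i) hf₀ hφ]
    _ ≤ ∫ t in a..b, ‖⟪f i t - f₀ t, φ t⟫‖ := intervalIntegral.norm_integral_le_integral_norm hab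
    _ ≤ ∫ t in a..b, ‖f i t - f₀ t‖ * ‖φ t‖ :=
      intervalIntegral.integral_mono_on hab
        ((((hf i).sub hf₀).inner hφ).norm.intervalIntegrable_of_Icc hab)
        ((((hf i).sub hf₀).norm.mul hφ.norm).intervalIntegrable_of_Icc hab)
        fun t _ => norm_inner_le_norm _ _
    _ ≤ _ := integral_norm_mul_norm_le_sqrt_mul_sqrt hab ((hf i).sub hf₀) hφ
  rw [tendsto_iff_norm_sub_tendsto_zero]
  refine squeeze_zero (fun _ => norm_nonneg _) hbound ?_
  simpa using (h.sqrt).mul_const _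

theorem norm_sq_le_exp_mul_of_two_inner_deriv_le {w w' : ℝ → H} {g : ℝ → ℝ} {T t : ℝ}
    (hw : ∀ s ∈ Icc 0 T, HasDerivAt w (w' s) s) (hg : IntegrableOn g (Icc 0 T))
    (hg₀ : ∀ s ∈ Icc 0 T, 0 ≤ g s) (hwg : ∀ s ∈ Icc 0 T, 2 * ⟪w' s, w s⟫ ≤ ‖w s‖ ^ 2 + g s)
    (ht : t ∈ Icc 0 T) :
    ‖w t‖ ^ 2 ≤ Real.exp T * (‖w 0‖ ^ 2 + ∫ s in 0..T, g s) := by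
  have hsub : Icc 0 t ⊆ Icc 0 T := Icc_subset_Icc_right ht.2
  have hderiv : ∀ s ∈ Icc 0 T, HasDerivAt (fun s => Real.exp (-s) * ‖w s‖ ^ 2)
      (Real.exp (-s) * (2 * ⟪w' s, w s⟫ - ‖w s‖ ^ 2)) s := by
    intro s hs
    refine (((Real.hasDerivAt_exp _).comp s (hasDerivAt_neg s)).mul
      (hw s hs).norm_sq).congr_deriv ?_
    rw [real_inner_comm]
    simp only [Function.comp_apply, mul_neg, mul_one]
    ring
  have hderiv_le : ∀ s ∈ Icc 0 T, Real.exp (-s) * (2 * ⟪w' s, w s⟫ - ‖w s‖ ^ 2) ≤ g s := by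
    intro s hs
    have hexp : Real.exp (-s) ≤ 1 := Real.exp_le_one_iff.2 (neg_nonpos.2 hs.1)
    nlinarith [hwg s hs, hg₀ s hs, Real.exp_pos (-s)]
  have hgrowth : Real.exp (-t) * ‖w t‖ ^ 2 - Real.exp (-0) * ‖w 0‖ ^ 2 ≤ ∫ s in 0..t, g s :=
    intervalIntegral.sub_le_integral_of_hasDeriv_right_of_le ht.1
      (fun s hs => (hderiv s (hsub hs)).continuousAt.continuousWithinAt)
      (fun s hs => (hderiv s (hsub (Ioo_subset_Icc_self hs))).hasDerivWithinAt)
      (hg.mono_set hsub) (fun s hs => hderiv_le s (hsub (Ioo_subset_Icc_self hs)))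
  have hmono : ∫ s in 0..t, g s ≤ ∫ s in 0..T, g s :=
    intervalIntegral.integral_mono_interval le_rfl ht.1 ht.2
      ((ae_restrict_mem measurableSet_Ioc).mono fun s hs => hg₀ s (Ioc_subset_Icc_self hs))
      ((intervalIntegrable_iff_integrableOn_Icc_of_le (ht.1.trans ht.2)).2 hg)
  have hexp : Real.exp t ≤ Real.exp T := Real.exp_le_exp.2 ht.2
  have hrhs : 0 ≤ ‖w 0‖ ^ 2 + ∫ s in 0..T, g s :=
    add_nonneg (sq_nonneg _) (intervalIntegral.integral_nonneg (ht.1.trans ht.2) hg₀)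
  calc ‖w t‖ ^ 2 = Real.exp t * (Real.exp (-t) * ‖w t‖ ^ 2) := by
        rw [← mul_assoc, ← Real.exp_add, add_neg_cancel, Real.exp_zero, one_mul]
    _ ≤ Real.exp t * (‖w 0‖ ^ 2 + ∫ s in 0..T, g s) := by
        gcongr
        simp only [neg_zero, Real.exp_zero, one_mul] at hgrowth
        linarith
    _ ≤ Real.exp T * (‖w 0‖ ^ 2 + ∫ s in 0..T, g s) := by gcongr

theorem norm_sub_sq_le_of_monotone {A : H → H} (hA : ∀ x y, 0 ≤ ⟪A x - A y, x - y⟫)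
    {u u' v v' f g : ℝ → H} {T t : ℝ} (hu : ∀ s ∈ Icc 0 T, HasDerivAt u (u' s) s)
    (hv : ∀ s ∈ Icc 0 T, HasDerivAt v (v' s) s) (hequ : ∀ s ∈ Icc 0 T, u' s + A (u s) = f s)
    (heqv : ∀ s ∈ Icc 0 T, v' s + A (v s) = g s)
    (hfg : IntegrableOn (fun s => ‖f s - g s‖ ^ 2) (Icc 0 T)) (ht : t ∈ Icc 0 T) :
    ‖u t - v t‖ ^ 2 ≤ Real.exp T * (‖u 0 - v 0‖ ^ 2 + ∫ s in 0..T, ‖f s - g s‖ ^ 2) := by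
  refine norm_sq_le_exp_mul_of_two_inner_deriv_le (fun s hs => (hu s hs).sub (hv s hs)) hfg
    (fun _ _ => sq_nonneg _) (fun s hs => ?_) ht
  have hdiff : u' s - v' s = (f s - g s) - (A (u s) - A (v s)) := by
    rw [← hequ s hs, ← heqv s hs]; abel
  show 2 * ⟪u' s - v' s, u s - v s⟫ ≤ ‖u s - v s‖ ^ 2 + ‖f s - g s‖ ^ 2
  rw [hdiff, inner_sub_left]
  nlinarith [hA (u s) (v s), real_inner_le_norm (f s - g s) (u s - v s),
    sq_nonneg (‖f s - g s‖ - ‖u s - v s‖)]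

theorem tendstoUniformlyOn_of_monotone_of_tendsto_inner {A : H → H}
    (hA : ∀ x y, 0 ≤ ⟪A x - A y, x - y⟫) {u u' f : ℕ → ℝ → H} {u₀ f₀ : ℝ → H} {x₀ : H} {T : ℝ}
    (hu : ∀ n, ∀ t ∈ Icc 0 T, HasDerivAt (u n) (u' n t) t)
    (heq : ∀ n, ∀ t ∈ Icc 0 T, u' n t + A (u n t) = f n t)
    (hf : ∀ n, ContinuousOn (f n) (Icc 0 T)) (hf₀ : ContinuousOn f₀ (Icc 0 T))
    (hdata : Tendsto (fun n => ‖u n 0 - x₀‖ ^ 2 + ∫ s in 0..T, ‖f n s - f₀ s‖ ^ 2) atTop (𝓝 0))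
    (hweak : ∀ t ∈ Icc 0 T, ∀ v, Tendsto (fun n => ⟪u n t, v⟫) atTop (𝓝 ⟪u₀ t, v⟫)) :
    TendstoUniformlyOn u u₀ atTop (Icc 0 T) := by
  set D := fun n => ‖u n 0 - x₀‖ ^ 2 + ∫ s in 0..T, ‖f n s - f₀ s‖ ^ 2
  have hD : ∀ n, D n = ‖u n 0 - x₀‖ ^ 2 + ∫ s in 0..T, ‖f n s - f₀ s‖ ^ 2 := fun _ => rfl
  have hpair : ∀ n m, ∀ t ∈ Icc 0 T, ‖u n t - u m t‖ ≤ √(Real.exp T * (2 * D n + 2 * D m)) := by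
    intro n m t ht
    have hT : 0 ≤ T := ht.1.trans ht.2
    have hsq : ∀ k l, ContinuousOn (fun s => ‖f k s - f l s‖ ^ 2) (Icc 0 T) :=
      fun k l => ((hf k).sub (hf l)).norm.pow 2
    have hsq₀ : ∀ k, ContinuousOn (fun s => ‖f k s - f₀ s‖ ^ 2) (Icc 0 T) :=
      fun k => ((hf k).sub hf₀).norm.pow 2
    have hI : ∀ k, IntervalIntegrable (fun s => 2 * ‖f k s - f₀ s‖ ^ 2) volume 0 T :=
      fun k => ((hsq₀ k).intervalIntegrable_of_Icc hT).const_mul 2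
    have hint : ∫ s in 0..T, ‖f n s - f m s‖ ^ 2 ≤
        2 * (∫ s in 0..T, ‖f n s - f₀ s‖ ^ 2) + 2 * ∫ s in 0..T, ‖f m s - f₀ s‖ ^ 2 := by
      rw [← intervalIntegral.integral_const_mul, ← intervalIntegral.integral_const_mul,
        ← intervalIntegral.integral_add (hI n) (hI m)]
      exact intervalIntegral.integral_mono_on hT ((hsq n m).intervalIntegrable_of_Icc hT)
        ((hI n).add (hI m)) fun s _ => norm_sub_sq_le_two_mul_add _ _ _
    refine Real.le_sqrt_of_sq_le ((norm_sub_sq_le_of_monotone hA (hu n) (hu m) (heq n) (heq m)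
      (hsq n m).integrableOn_Icc ht).trans (mul_le_mul_of_nonneg_left ?_ (Real.exp_pos T).le))
    linarith [norm_sub_sq_le_two_mul_add (u n 0) (u m 0) x₀, hD n, hD m]
  have hD_lim : Tendsto (fun n => √(Real.exp T * (2 * D n))) atTop (𝓝 0) := by
    simpa using ((hdata.const_mul 2).const_mul (Real.exp T)).sqrt
  have hlim : ∀ n, ∀ t ∈ Icc 0 T, ‖u n t - u₀ t‖ ≤ √(Real.exp T * (2 * D n)) := by
    intro n t ht
    refine norm_le_of_tendsto_inner (l := atTop) (x := fun m => u n t - u m t) ?_ ?_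
      (Eventually.of_forall fun m => hpair n m t ht)
    · simpa only [inner_sub_left] using tendsto_const_nhds.sub (hweak t ht _)
    · simpa using (((hdata.const_mul 2).const_add (2 * D n)).const_mul (Real.exp T)).sqrt
  rw [Metric.tendstoUniformlyOn_iff]
  intro ε hε
  filter_upwards [hD_lim.eventually (gt_mem_nhds hε)] with n hn t ht
  rw [dist_comm, dist_eq_norm]
  exact (hlim n t ht).trans_lt hn

theorem tendsto_integral_inner_comp_of_tendstoUniformlyOn {X : Type*} [PseudoMetricSpace X]
    {ι : Type*} {l : Filter ι} [l.IsCountablyGenerated] {A : X → H} {u : ι → ℝ → X}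
    {u₀ : ℝ → X} {φ : ℝ → H} {a b : ℝ} (hab : a ≤ b) (hA : Continuous A)
    (hu : ∀ i, ContinuousOn (u i) (Icc a b)) (hu₀ : ContinuousOn u₀ (Icc a b))
    (hφ : ContinuousOn φ (Icc a b)) (h : TendstoUniformlyOn u u₀ l (Icc a b)) :
    Tendsto (fun i => ∫ t in a..b, ⟪A (u i t), φ t⟫) l (𝓝 (∫ t in a..b, ⟪A (u₀ t), φ t⟫)) := by
  have hpair : TendstoUniformlyOn (fun i t => (u i t, φ t)) (fun t => (u₀ t, φ t)) l (Icc a b) := by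
    rw [Metric.tendstoUniformlyOn_iff] at h ⊢
    intro ε hε
    filter_upwards [h ε hε] with i hi t ht
    simpa [Prod.dist_eq] using hi t ht
  have hcomp := hpair.comp_of_isCompact_image
    (show Continuous fun p : X × H => ⟪A p.1, p.2⟫ by fun_prop)
    (isCompact_Icc.image_of_continuousOn (hu₀.prodMk hφ))
  rw [← uIcc_of_le hab] at hu hφ hcomp
  exact hcomp.tendsto_intervalIntegral_of_continuousOn
    (Eventually.of_forall fun i => (hA.comp_continuousOn (hu i)).inner hφ)

end InnerProductSpace

theorem minty_limit_identification_general
    {H : Type*} [NormedAddCommGroup H] [InnerProductSpace ℝ H]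
    (T : ℝ) (hT : 0 < T) (A : H → H)
    (hAcont : Continuous A)
    (hAmono : ∀ x y : H, 0 ≤ ⟪A x - A y, x - y⟫)
    (u : ℕ → ℝ → H) (u' : ℕ → ℝ → H) (f : ℕ → ℝ → H) (V : ℕ → H)
    (u₀ u₀' : ℝ → H) (f₀ : ℝ → H) (V₀ : H)
    (hderiv : ∀ n, ∀ t ∈ Set.Icc (0 : ℝ) T, HasDerivAt (u n) (u' n t) t)
    (hfcont : ∀ n, ContinuousOn (f n) (Set.Icc 0 T))
    (heq : ∀ n, ∀ t ∈ Set.Icc (0 : ℝ) T, u' n t + A (u n t) = f n t)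
    (hinit : ∀ n, u n 0 = V n)
    (hderiv₀ : ∀ t ∈ Set.Icc (0 : ℝ) T, HasDerivAt u₀ (u₀' t) t)
    (hcont₀ : ContinuousOn u₀' (Set.Icc 0 T))
    (hf₀cont : ContinuousOn f₀ (Set.Icc 0 T))
    -- (b) pointwise-in-time weak convergence
    (hweak : ∀ t ∈ Set.Icc (0 : ℝ) T, ∀ v : H,
      Tendsto (fun n => ⟪u n t, v⟫) atTop (nhds ⟪u₀ t, v⟫))
    -- (c) weak convergence of derivatives against continuous test functions
    (hweak' : ∀ φ : ℝ → H, Continuous φ →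
      Tendsto (fun n => ∫ τ in (0 : ℝ)..T, ⟪u' n τ, φ τ⟫) atTop
        (nhds (∫ τ in (0 : ℝ)..T, ⟪u₀' τ, φ τ⟫)))
    -- (d) strong L² convergence of the right-hand sides
    (hfconv : Tendsto (fun n => ∫ τ in (0 : ℝ)..T, ‖f n τ - f₀ τ‖ ^ 2)
      atTop (nhds 0))
    -- (e) strong convergence of the initial data
    (hVconv : Tendsto (fun n => ‖V n - V₀‖) atTop (nhds 0)) :
    u₀ 0 = V₀ ∧
      ∀ t ∈ Set.Icc (0 : ℝ) T, u₀' t + A (u₀ t) = f₀ t := by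
  have hu : ∀ n, ContinuousOn (u n) (Icc 0 T) := fun n t ht =>
    (hderiv n t ht).continuousAt.continuousWithinAt
  have hu₀ : ContinuousOn u₀ (Icc 0 T) := fun t ht =>
    (hderiv₀ t ht).continuousAt.continuousWithinAt
  have hAu₀ : ContinuousOn (fun τ => A (u₀ τ)) (Icc 0 T) := hAcont.comp_continuousOn hu₀
  have hunif : TendstoUniformlyOn u u₀ atTop (Icc 0 T) :=
    tendstoUniformlyOn_of_monotone_of_tendsto_inner (x₀ := V₀) hAmono hderiv heq hfcont hf₀cont
      (by simpa [hinit] using (hVconv.pow 2).add hfconv) hweak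
  refine ⟨tendsto_nhds_unique (hunif.tendsto_at (left_mem_Icc.2 hT.le)) ?_, fun t ht => ?_⟩
  · simpa [hinit] using tendsto_iff_norm_sub_tendsto_zero.2 hVconv
  refine eq_sub_iff_add_eq.1 (eqOn_of_forall_integral_inner_eq hT hcont₀ (hf₀cont.sub hAu₀)
    (fun φ hφ => ?_) ht)
  have hφ' : ContinuousOn φ (Icc 0 T) := hφ.continuousOn
  simp only [Pi.sub_apply]
  rw [integral_inner_sub_left (G := fun τ => A (u₀ τ)) hT.le hf₀cont hAu₀ hφ']
  refine tendsto_nhds_unique (hweak' φ hφ) <|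
    ((tendsto_integral_inner_of_tendsto_integral_norm_sub_sq hT.le hfcont hf₀cont hφ' hfconv).sub
      (tendsto_integral_inner_comp_of_tendstoUniformlyOn hT.le hAcont hu hu₀ hφ' hunif)).congr
      fun n => ?_
  rw [← integral_inner_sub_left (G := fun τ => A (u n τ)) hT.le (hfcont n)
    (hAcont.comp_continuousOn (hu n)) hφ']
  refine intervalIntegral.integral_congr fun τ hτ => ?_
  rw [uIcc_of_le hT.le] at hτ
  simp only [← heq n τ hτ, add_sub_cancel_right]

/-- Identification of the limit equation in the model case of the
Minty monotonicity method: under uniform boundedness, weak convergence of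
`u_n(t)` and of the derivatives (tested against continuous functions), strong
convergence of the data `f_n → f` in `L²` and `V_n → V` in `H`, the limit
satisfies `u₀(0) = V` and the limit equation `u₀' + A u₀ = f` on `[0,T]`. -/
theorem minty_limit_identification
    {H : Type*} [NormedAddCommGroup H] [InnerProductSpace ℝ H] [CompleteSpace H]
    (T : ℝ) (hT : 0 < T) (A : H → H)
    (hAcont : Continuous A)
    (hAmono : ∀ x y : H, 0 ≤ ⟪A x - A y, x - y⟫)
    (u : ℕ → ℝ → H) (u' : ℕ → ℝ → H) (f : ℕ → ℝ → H) (V : ℕ → H)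
    (u₀ u₀' : ℝ → H) (f₀ : ℝ → H) (V₀ : H)
    (hderiv : ∀ n, ∀ t ∈ Set.Icc (0 : ℝ) T, HasDerivAt (u n) (u' n t) t)
    (hcont : ∀ n, ContinuousOn (u' n) (Set.Icc 0 T))
    (hfcont : ∀ n, ContinuousOn (f n) (Set.Icc 0 T))
    (heq : ∀ n, ∀ t ∈ Set.Icc (0 : ℝ) T, u' n t + A (u n t) = f n t)
    (hinit : ∀ n, u n 0 = V n)
    (hderiv₀ : ∀ t ∈ Set.Icc (0 : ℝ) T, HasDerivAt u₀ (u₀' t) t)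
    (hcont₀ : ContinuousOn u₀' (Set.Icc 0 T))
    (hf₀cont : ContinuousOn f₀ (Set.Icc 0 T))
    -- (a) uniform boundedness
    (hbound : ∃ C : ℝ, ∀ n, ∀ t ∈ Set.Icc (0 : ℝ) T, ‖u n t‖ ≤ C)
    -- (b) pointwise-in-time weak convergence
    (hweak : ∀ t ∈ Set.Icc (0 : ℝ) T, ∀ v : H,
      Tendsto (fun n => ⟪u n t, v⟫) atTop (nhds ⟪u₀ t, v⟫))
    -- (c) weak convergence of derivatives against continuous test functions
    (hweak' : ∀ φ : ℝ → H, Continuous φ →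
      Tendsto (fun n => ∫ τ in (0 : ℝ)..T, ⟪u' n τ, φ τ⟫) atTop
        (nhds (∫ τ in (0 : ℝ)..T, ⟪u₀' τ, φ τ⟫)))
    -- (d) strong L² convergence of the right-hand sides
    (hfconv : Tendsto (fun n => ∫ τ in (0 : ℝ)..T, ‖f n τ - f₀ τ‖ ^ 2)
      atTop (nhds 0))
    -- (e) strong convergence of the initial data
    (hVconv : Tendsto (fun n => ‖V n - V₀‖) atTop (nhds 0)) :
    u₀ 0 = V₀ ∧
      ∀ t ∈ Set.Icc (0 : ℝ) T, u₀' t + A (u₀ t) = f₀ t :=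
  minty_limit_identification_general T hT A hAcont hAmono u u' f V u₀ u₀' f₀ V₀ hderiv hfcont heq
    hinit hderiv₀ hcont₀ hf₀cont hweak hweak' hfconv hVconv
end
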